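/- ⟨N(x,y), x⟩ = 0 for all x, y ∈ g (the structure belongs to the Gray-Hervella class W₁⊕W₃⊕W₄, also denoted G₁) if and only if N = 0 (the structure is Hermitian, class W₃⊕W₄), which holds if and only if w₀ = 0 and D∘J' = J'∘D. In other words, on an almost abelian Lie algebra the classes W₁⊕W₃⊕W₄ and W₃⊕W₄ coincide. -/
import Mathlib


open scoped BigOperators
open Matrix

noncomputable section

/-- The underlying `2n`-dimensional real vector space `ℝ^{2n}`, whose standard basis
plays the role of the orthonormal basis `e₀, e₁, …, e_{2n-1}`. -/
abbrev G (n : ℕ) := Fin (2*n) → ℝ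

/-- The inner product `⟨·,·⟩` making the standard basis orthonormal. -/
def inn {n : ℕ} (x y : G n) : ℝ := ∑ i, x i * y i

/-- The standard basis vector `e k` (indexed by a natural number `k`). -/
def E (n : ℕ) (k : ℕ) : G n := fun i => if (i : ℕ) = k then 1 else 0

/-- Membership in `a = span{e₂, …, e_{2n-1}}`. -/
def inA {n : ℕ} (x : G n) : Prop := ∀ i : Fin (2*n), (i : ℕ) < 2 → x i = 0

/-- The orthogonal almost complex structure `J e_{2i} = e_{2i+1}`, `J e_{2i+1} = -e_{2i}`. -/
def Jm (n : ℕ) : Matrix (Fin (2*n)) (Fin (2*n)) ℝ :=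
  Matrix.of fun k l =>
    if (k : ℕ) = (l : ℕ) + 1 ∧ Even (l : ℕ) then (1 : ℝ)
    else if (l : ℕ) = (k : ℕ) + 1 ∧ Even (k : ℕ) then -1 else 0

/-- `D` is (the extension by zero of) an endomorphism of `a`: it vanishes on
`span{e₀, e₁}` and takes values orthogonal to `span{e₀, e₁}`. -/
def DinA {n : ℕ} (D : Matrix (Fin (2*n)) (Fin (2*n)) ℝ) : Prop :=
  ∀ k l : Fin (2*n), ((k : ℕ) < 2 ∨ (l : ℕ) < 2) → D k l = 0

/-- The matrix of `L` determined by the data `μ, v₀, w₀, D`, i.e.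
`L e₀ = 0`, `L e₁ = μ e₁ + v₀` and `L x = ⟨w₀, x⟩ e₁ + D x` for `x ∈ a`
(for `v₀, w₀ ∈ a` and `D` an endomorphism of `a`). -/
def Lm {n : ℕ} (μ : ℝ) (v₀ w₀ : G n) (D : Matrix (Fin (2*n)) (Fin (2*n)) ℝ) :
    Matrix (Fin (2*n)) (Fin (2*n)) ℝ :=
  Matrix.of fun k l =>
    (if (k : ℕ) = 1 ∧ (l : ℕ) = 1 then μ else 0)
      + (if (l : ℕ) = 1 then v₀ k else 0)
      + (if (k : ℕ) = 1 then w₀ l else 0)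
      + D k l

/-- The Lie bracket of the almost abelian Lie algebra `g = ℝ e₀ ⋉_L u`:
`[e₀, u] = L u` for `u ∈ u = span{e₁, …, e_{2n-1}}` and `[u, v] = 0` for `u, v ∈ u`. -/
def br {n : ℕ} (L : Matrix (Fin (2*n)) (Fin (2*n)) ℝ) (x y : G n) : G n :=
  inn x (E n 0) • L.mulVec y - inn y (E n 0) • L.mulVec x

/-- `nabla` is the Levi-Civita connection of `⟨·,·⟩`, i.e. it satisfies the Koszul
formula `2⟨∇_x y, z⟩ = ⟨[x,y],z⟩ − ⟨[y,z],x⟩ + ⟨[z,x],y⟩`. -/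
def Koszul {n : ℕ} (L : Matrix (Fin (2*n)) (Fin (2*n)) ℝ) (nabla : G n → G n → G n) : Prop :=
  ∀ x y z : G n, 2 * inn (nabla x y) z
    = inn (br L x y) z - inn (br L y z) x + inn (br L z x) y

/-- `(∇_y J)(x) = ∇_y (Jx) − J ∇_y x`. -/
def covJ {n : ℕ} (nabla : G n → G n → G n) (y x : G n) : G n :=
  nabla y ((Jm n).mulVec x) - (Jm n).mulVec (nabla y x)

/-- The rough Laplacian
`(∇*∇J)(x) = Σ_i ((∇_{e_i}(∇_{e_i}J))(x) − (∇_{∇_{e_i}e_i} J)(x))`. -/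
def roughLap {n : ℕ} (nabla : G n → G n → G n) (x : G n) : G n :=
  ∑ i : Fin (2*n),
    (nabla (E n i.val) (covJ nabla (E n i.val) x)
      - covJ nabla (E n i.val) (nabla (E n i.val) x)
      - covJ nabla (nabla (E n i.val) (E n i.val)) x)

/-- `J` is harmonic: `J ∘ (∇*∇J) = (∇*∇J) ∘ J`. -/
def Harmonic {n : ℕ} (nabla : G n → G n → G n) : Prop :=
  ∀ x : G n, (Jm n).mulVec (roughLap nabla x) = roughLap nabla ((Jm n).mulVec x)

/-- Symmetric part of a matrix. -/
def symPart {n : ℕ} (M : Matrix (Fin (2*n)) (Fin (2*n)) ℝ) :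
    Matrix (Fin (2*n)) (Fin (2*n)) ℝ := (1/2 : ℝ) • (M + Mᵀ)

/-- Skew-symmetric part of a matrix. -/
def skewPart {n : ℕ} (M : Matrix (Fin (2*n)) (Fin (2*n)) ℝ) :
    Matrix (Fin (2*n)) (Fin (2*n)) ℝ := (1/2 : ℝ) • (M - Mᵀ)

/-- `γ = (v₀ + w₀)/2`. -/
def gam {n : ℕ} (v₀ w₀ : G n) : G n := (1/2 : ℝ) • (v₀ + w₀)

/-- `ρ = (v₀ − w₀)/2`. -/
def rho {n : ℕ} (v₀ w₀ : G n) : G n := (1/2 : ℝ) • (v₀ - w₀)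

/-- The fundamental 2-form `ω(x,y) = ⟨Jx, y⟩`. -/
def om {n : ℕ} (x y : G n) : ℝ := inn ((Jm n).mulVec x) y

/-- `(∇_x ω)(y,z) = −ω(∇_x y, z) − ω(y, ∇_x z)`. -/
def nablaOm {n : ℕ} (nabla : G n → G n → G n) (x y z : G n) : ℝ :=
  - om (nabla x y) z - om y (nabla x z)

/-- `dω(x,y,z) = −ω([x,y],z) − ω([y,z],x) − ω([z,x],y)`. -/
def dOm {n : ℕ} (L : Matrix (Fin (2*n)) (Fin (2*n)) ℝ) (x y z : G n) : ℝ :=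
  - om (br L x y) z - om (br L y z) x - om (br L z x) y

/-- The codifferential `δω(x) = −Σ_i (∇_{e_i}ω)(e_i, x)`. -/
def deltaOm {n : ℕ} (nabla : G n → G n → G n) (x : G n) : ℝ :=
  - ∑ i : Fin (2*n), nablaOm nabla (E n i.val) (E n i.val) x

/-- The Nijenhuis tensor `N(x,y) = [x,y] + J([Jx,y] + [x,Jy]) − [Jx,Jy]`. -/
def Nij {n : ℕ} (L : Matrix (Fin (2*n)) (Fin (2*n)) ℝ) (x y : G n) : G n :=
  br L x y
    + (Jm n).mulVec (br L ((Jm n).mulVec x) y + br L x ((Jm n).mulVec y))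
    - br L ((Jm n).mulVec x) ((Jm n).mulVec y)

/-- `T⁻(x,y,z) = (∇_x ω)(y,z) − (∇_{Jx} ω)(Jy,z)`. -/
def Tminus {n : ℕ} (nabla : G n → G n → G n) (x y z : G n) : ℝ :=
  nablaOm nabla x y z - nablaOm nabla ((Jm n).mulVec x) ((Jm n).mulVec y) z

/-- `T⁺(x,y,z) = (∇_x ω)(y,z) + (∇_{Jx} ω)(Jy,z)`. -/
def Tplus {n : ℕ} (nabla : G n → G n → G n) (x y z : G n) : ℝ :=
  nablaOm nabla x y z + nablaOm nabla ((Jm n).mulVec x) ((Jm n).mulVec y) z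

/-- `U(x,y,z) = ⟨x,y⟩δω(z) − ⟨x,z⟩δω(y) − ⟨x,Jy⟩δω(Jz) + ⟨x,Jz⟩δω(Jy)`. -/
def Uten {n : ℕ} (nabla : G n → G n → G n) (x y z : G n) : ℝ :=
  inn x y * deltaOm nabla z - inn x z * deltaOm nabla y
    - inn x ((Jm n).mulVec y) * deltaOm nabla ((Jm n).mulVec z)
    + inn x ((Jm n).mulVec z) * deltaOm nabla ((Jm n).mulVec y)

/-- The Lee form `θ(x) = −(1/(n−1)) δω(Jx)`. -/
def Lee {n : ℕ} (nabla : G n → G n → G n) (x : G n) : ℝ :=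
  -(1/((n : ℝ) - 1)) * deltaOm nabla ((Jm n).mulVec x)

/-- The identity of `a`, extended by zero to `g`. -/
def Ia (n : ℕ) : Matrix (Fin (2*n)) (Fin (2*n)) ℝ :=
  Matrix.of fun k l => if k = l ∧ 2 ≤ (k : ℕ) then (1 : ℝ) else 0


namespace Statement15Aux

variable {n : ℕ}

lemma inn_E' (u : G n) (k : ℕ) (hk : k < 2*n) : inn u (E n k) = u ⟨k, hk⟩ := by
  unfold inn E
  rw [Finset.sum_eq_single (⟨k, hk⟩ : Fin (2*n))]
  · simp
  · intro b _ hb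
    rw [if_neg (fun hc => hb (Fin.ext hc)), mul_zero]
  · intro h; exact absurd (Finset.mem_univ _) h

lemma mulVec_E' (M : Matrix (Fin (2*n)) (Fin (2*n)) ℝ) (k : ℕ) (hk : k < 2*n)
    (j : Fin (2*n)) : M.mulVec (E n k) j = M j ⟨k, hk⟩ := by
  simp only [Matrix.mulVec, dotProduct, E]
  rw [Finset.sum_eq_single (⟨k, hk⟩ : Fin (2*n))]
  · simp
  · intro b _ hb
    rw [if_neg (fun hc => hb (Fin.ext hc)), mul_zero]
  · intro h; exact absurd (Finset.mem_univ _) h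

lemma Jm_apply_even (x : G n) (i : Fin (2*n)) (h : (i:ℕ) % 2 = 0) :
    (Jm n).mulVec x i = - x ⟨(i:ℕ)+1, by have := i.isLt; omega⟩ := by
  simp only [Matrix.mulVec, dotProduct]
  rw [Finset.sum_eq_single (⟨(i:ℕ)+1, by have := i.isLt; omega⟩ : Fin (2*n))]
  · have hJ : Jm n i ⟨(i:ℕ)+1, by have := i.isLt; omega⟩ = -1 := by
      simp only [Jm, Matrix.of_apply, Nat.even_iff]
      split_ifs with hA hB
      · omega
      · rfl
      · exact absurd ⟨trivial, h⟩ hB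
    rw [hJ]; ring
  · intro b _ hb
    have hbv : (b:ℕ) ≠ (i:ℕ)+1 := fun hc => hb (Fin.ext hc)
    have hJ : Jm n i b = 0 := by
      simp only [Jm, Matrix.of_apply, Nat.even_iff]
      split_ifs with hA hB
      · omega
      · omega
      · rfl
    rw [hJ, zero_mul]
  · intro h'; exact absurd (Finset.mem_univ _) h'

lemma Jm_apply_odd (x : G n) (i : Fin (2*n)) (h : (i:ℕ) % 2 = 1) :
    (Jm n).mulVec x i = x ⟨(i:ℕ)-1, by have := i.isLt; omega⟩ := by
  simp only [Matrix.mulVec, dotProduct]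
  rw [Finset.sum_eq_single (⟨(i:ℕ)-1, by have := i.isLt; omega⟩ : Fin (2*n))]
  · have hJ : Jm n i ⟨(i:ℕ)-1, by have := i.isLt; omega⟩ = 1 := by
      simp only [Jm, Matrix.of_apply, Nat.even_iff]
      split_ifs with hA hB
      · rfl
      · exact absurd ⟨by omega, by omega⟩ hA
      · exact absurd ⟨by omega, by omega⟩ hA
    rw [hJ, one_mul]
  · intro b _ hb
    have hbv : (b:ℕ) ≠ (i:ℕ)-1 := fun hc => hb (Fin.ext hc)
    have hJ : Jm n i b = 0 := by
      simp only [Jm, Matrix.of_apply, Nat.even_iff]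
      split_ifs with hA hB
      · omega
      · omega
      · rfl
    rw [hJ, zero_mul]
  · intro h'; exact absurd (Finset.mem_univ _) h'

lemma JJ (x : G n) : (Jm n).mulVec ((Jm n).mulVec x) = -x := by
  funext i
  rcases Nat.even_or_odd (i:ℕ) with h | h
  · rw [Nat.even_iff] at h
    have hlt : (i:ℕ)+1 < 2*n := by have := i.isLt; omega
    rw [Jm_apply_even ((Jm n).mulVec x) i h,
      Jm_apply_odd x ⟨(i:ℕ)+1, hlt⟩ (by show ((i:ℕ)+1) % 2 = 1; omega)]
    have he : (⟨((⟨(i:ℕ)+1, hlt⟩ : Fin (2*n)) : ℕ) - 1,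
        by have := i.isLt; omega⟩ : Fin (2*n)) = i := by
      apply Fin.ext; show (i:ℕ)+1-1 = (i:ℕ); omega
    rw [he, Pi.neg_apply]
  · rw [Nat.odd_iff] at h
    have hlt : (i:ℕ)-1 < 2*n := by have := i.isLt; omega
    rw [Jm_apply_odd ((Jm n).mulVec x) i h,
      Jm_apply_even x ⟨(i:ℕ)-1, hlt⟩ (by show ((i:ℕ)-1) % 2 = 0; omega)]
    have he : (⟨((⟨(i:ℕ)-1, hlt⟩ : Fin (2*n)) : ℕ) + 1,
        by show (i:ℕ)-1+1 < 2*n; have := i.isLt; omega⟩ : Fin (2*n)) = i := by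
      apply Fin.ext; show (i:ℕ)-1+1 = (i:ℕ); omega
    rw [he, Pi.neg_apply]

lemma Jcomp0 (h0 : 0 < 2*n) (h1 : 1 < 2*n) (x : G n) :
    (Jm n).mulVec x ⟨0, h0⟩ = - x ⟨1, h1⟩ := by
  rw [Jm_apply_even x ⟨0, h0⟩ rfl]

lemma Jcomp1 (h0 : 0 < 2*n) (h1 : 1 < 2*n) (x : G n) :
    (Jm n).mulVec x ⟨1, h1⟩ = x ⟨0, h0⟩ := by
  rw [Jm_apply_odd x ⟨1, h1⟩ rfl]
  exact congrArg x (Fin.ext rfl)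

lemma inn_add_left (u v w : G n) : inn (u + v) w = inn u w + inn v w := by
  simp [inn, add_mul, Finset.sum_add_distrib]

lemma inn_sub_left (u v w : G n) : inn (u - v) w = inn u w - inn v w := by
  simp [inn, sub_mul, Finset.sum_sub_distrib]

lemma inn_smul_left (a : ℝ) (u w : G n) : inn (a • u) w = a * inn u w := by
  simp [inn, Finset.mul_sum, mul_assoc]

lemma inn_add_right (u v w : G n) : inn u (v + w) = inn u v + inn u w := by
  simp [inn, mul_add, Finset.sum_add_distrib]

lemma inn_zero_left (w : G n) : inn (0 : G n) w = 0 := by simp [inn]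

lemma inn_self_eq_zero {u : G n} (h : inn u u = 0) : u = 0 := by
  unfold inn at h
  funext i
  have h' := (Finset.sum_eq_zero_iff_of_nonneg
    (fun j _ => mul_self_nonneg (u j))).1 h i (Finset.mem_univ i)
  exact mul_self_eq_zero.1 h'

/-- `A z = L z + J L J z`. -/
def Af (L : Matrix (Fin (2*n)) (Fin (2*n)) ℝ) (z : G n) : G n :=
  L.mulVec z + (Jm n).mulVec (L.mulVec ((Jm n).mulVec z))

lemma Af_add (L : Matrix (Fin (2*n)) (Fin (2*n)) ℝ) (u v : G n) :
    Af L (u + v) = Af L u + Af L v := by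
  unfold Af
  simp only [Matrix.mulVec_add]
  abel

lemma Af_smul (L : Matrix (Fin (2*n)) (Fin (2*n)) ℝ) (a : ℝ) (u : G n) :
    Af L (a • u) = a • Af L u := by
  unfold Af
  simp only [Matrix.mulVec_smul, smul_add]

lemma Nij_eq (L : Matrix (Fin (2*n)) (Fin (2*n)) ℝ) (h0 : 0 < 2*n) (h1 : 1 < 2*n)
    (x y : G n) :
    Nij L x y
      = x ⟨0, h0⟩ • Af L y - y ⟨0, h0⟩ • Af L x
        - x ⟨1, h1⟩ • (Jm n).mulVec (Af L y)
        + y ⟨1, h1⟩ • (Jm n).mulVec (Af L x) := by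
  have e0 : ∀ u : G n, inn u (E n 0) = u ⟨0, h0⟩ := fun u => inn_E' u 0 h0
  unfold Nij br Af
  simp only [e0, Jcomp0 h0 h1]
  simp only [Matrix.mulVec_add, Matrix.mulVec_sub, Matrix.mulVec_smul, JJ]
  module

lemma stepI (h0 : 0 < 2*n) (h1 : 1 < 2*n) (L : Matrix (Fin (2*n)) (Fin (2*n)) ℝ)
    (hG : ∀ x y : G n, inn (Nij L x y) x = 0) {y : G n} (hy : inA y) :
    Af L y = 0 := by
  have hy0 : y ⟨0, h0⟩ = 0 := hy ⟨0, h0⟩ (by show (0:ℕ) < 2; norm_num)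
  have hy1 : y ⟨1, h1⟩ = 0 := hy ⟨1, h1⟩ (by show (1:ℕ) < 2; norm_num)
  set u := Af L y with hu
  have key : ∀ x : G n,
      x ⟨0, h0⟩ * inn u x - x ⟨1, h1⟩ * inn ((Jm n).mulVec u) x = 0 := by
    intro x
    have hx := hG x y
    rw [Nij_eq L h0 h1, hy0, hy1] at hx
    simpa [inn_sub_left, inn_add_left, inn_smul_left] using hx
  have hu0 : u ⟨0, h0⟩ = 0 := by
    have k0 := key (E n 0)
    rw [inn_E' u 0 h0, inn_E' ((Jm n).mulVec u) 0 h0] at k0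
    simp only [E] at k0
    norm_num at k0
    exact k0
  have hu1 : u ⟨1, h1⟩ = 0 := by
    have k1 := key (E n 0 + E n 1)
    rw [inn_add_right, inn_add_right, inn_E' u 0 h0, inn_E' u 1 h1,
      inn_E' ((Jm n).mulVec u) 0 h0, inn_E' ((Jm n).mulVec u) 1 h1,
      Jcomp0 h0 h1, Jcomp1 h0 h1] at k1
    simp only [Pi.add_apply, E] at k1
    norm_num at k1
    rw [hu0] at k1
    linarith
  funext i
  rcases lt_or_ge (i:ℕ) 2 with hi | hi
  · interval_cases hI : (i:ℕ)
    · have hieq : i = ⟨0, h0⟩ := Fin.ext hI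
      rw [hieq]; exact hu0
    · have hieq : i = ⟨1, h1⟩ := Fin.ext hI
      rw [hieq]; exact hu1
  · have ki := key (E n 0 + E n (i:ℕ))
    rw [inn_add_right, inn_add_right, inn_E' u 0 h0, inn_E' u (i:ℕ) i.isLt,
      inn_E' ((Jm n).mulVec u) 0 h0, inn_E' ((Jm n).mulVec u) (i:ℕ) i.isLt] at ki
    simp only [Pi.add_apply, E, Fin.eta] at ki
    rw [hu0] at ki
    have hne0 : ¬ ((0:ℕ) = (i:ℕ)) := by omega
    have hne1 : ¬ ((1:ℕ) = (i:ℕ)) := by omega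
    simp only [hne0, hne1, if_false, if_true] at ki
    norm_num at ki
    exact ki


lemma E_self (k : ℕ) (hk : k < 2*n) : E n k ⟨k, hk⟩ = 1 := by
  simp [E]

lemma E_ne (k : ℕ) (j : Fin (2*n)) (hj : (j:ℕ) ≠ k) : E n k j = 0 := by
  simp [E, hj]

lemma Jm_E0 (h0 : 0 < 2*n) (h1 : 1 < 2*n) : (Jm n).mulVec (E n 0) = E n 1 := by
  funext k
  rw [mulVec_E' _ 0 h0 k]
  simp only [Jm, Matrix.of_apply, Nat.even_iff, E, and_true, true_and, and_false,
    false_and]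
  split_ifs <;> first | rfl | omega | simp_all

lemma Jm_E1 (h0 : 0 < 2*n) (h1 : 1 < 2*n) : (Jm n).mulVec (E n 1) = - E n 0 := by
  funext k
  rw [mulVec_E' _ 1 h1 k]
  simp only [Jm, Matrix.of_apply, Nat.even_iff, E, Pi.neg_apply, and_true, true_and,
    and_false, false_and]
  split_ifs <;> first | rfl | omega | simp_all

lemma Lm_E0 (h0 : 0 < 2*n) (μ : ℝ) (v₀ w₀ : G n) (hw : inA w₀)
    (D : Matrix (Fin (2*n)) (Fin (2*n)) ℝ) (hD : DinA D) :
    (Lm μ v₀ w₀ D).mulVec (E n 0) = 0 := by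
  funext k
  rw [mulVec_E' _ 0 h0 k]
  simp only [Lm, Matrix.of_apply]
  rw [hw ⟨0, h0⟩ (by show (0:ℕ) < 2; norm_num),
    hD k ⟨0, h0⟩ (Or.inr (by show (0:ℕ) < 2; norm_num))]
  simp only [Pi.zero_apply, and_true, true_and, and_false, false_and]
  split_ifs <;> first | rfl | omega | simp_all

lemma Lm_on_a (h1 : 1 < 2*n) (μ : ℝ) (v₀ w₀ : G n)
    (D : Matrix (Fin (2*n)) (Fin (2*n)) ℝ) {x : G n} (hx : inA x) :
    (Lm μ v₀ w₀ D).mulVec x = inn w₀ x • E n 1 + D.mulVec x := by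
  funext k
  have hmv : (Lm μ v₀ w₀ D).mulVec x k = ∑ l, Lm μ v₀ w₀ D k l * x l := rfl
  have hstep : ∀ l : Fin (2*n), Lm μ v₀ w₀ D k l * x l
      = (if (k:ℕ) = 1 then w₀ l * x l else 0) + D k l * x l := by
    intro l
    by_cases hl : (l:ℕ) = 1
    · rw [hx l (by omega)]
      simp
    · by_cases hk : (k:ℕ) = 1 <;> simp [Lm, hl, hk] <;> ring
  rw [hmv, Finset.sum_congr rfl (fun l _ => hstep l), Finset.sum_add_distrib]
  have hD2 : (∑ l, D k l * x l) = D.mulVec x k := rfl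
  have hRHS : (inn w₀ x • E n 1 + D.mulVec x) k
      = inn w₀ x * E n 1 k + D.mulVec x k := rfl
  rw [hD2, hRHS]
  by_cases hk : (k:ℕ) = 1
  · simp only [hk, if_true, E, inn]
    norm_num
  · simp only [hk, if_false, E, inn]
    norm_num

lemma inA_D (D : Matrix (Fin (2*n)) (Fin (2*n)) ℝ) (hD : DinA D) (x : G n) :
    inA (D.mulVec x) := by
  intro i hi
  show ∑ l, D i l * x l = 0
  exact Finset.sum_eq_zero fun l _ => by rw [hD i l (Or.inl hi), zero_mul]

lemma inA_J (h0 : 0 < 2*n) (h1 : 1 < 2*n) {x : G n} (hx : inA x) :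
    inA ((Jm n).mulVec x) := by
  intro i hi
  have hcase : (i:ℕ) = 0 ∨ (i:ℕ) = 1 := by omega
  rcases hcase with h | h
  · have hieq : i = ⟨0, h0⟩ := Fin.ext h
    rw [hieq, Jcomp0 h0 h1, hx ⟨1, h1⟩ (by show (1:ℕ) < 2; norm_num), neg_zero]
  · have hieq : i = ⟨1, h1⟩ := Fin.ext h
    rw [hieq, Jcomp1 h0 h1]
    exact hx ⟨0, h0⟩ (by show (0:ℕ) < 2; norm_num)

lemma Af_on_a (h0 : 0 < 2*n) (h1 : 1 < 2*n) (μ : ℝ) (v₀ w₀ : G n)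
    (D : Matrix (Fin (2*n)) (Fin (2*n)) ℝ) {x : G n} (hx : inA x) :
    Af (Lm μ v₀ w₀ D) x
      = inn w₀ x • E n 1 + D.mulVec x - inn w₀ ((Jm n).mulVec x) • E n 0
        + (Jm n).mulVec (D.mulVec ((Jm n).mulVec x)) := by
  unfold Af
  rw [Lm_on_a h1 μ v₀ w₀ D hx, Lm_on_a h1 μ v₀ w₀ D (inA_J h0 h1 hx),
    Matrix.mulVec_add, Matrix.mulVec_smul, Jm_E1 h0 h1]
  module

lemma stepII (h0 : 0 < 2*n) (h1 : 1 < 2*n) (L : Matrix (Fin (2*n)) (Fin (2*n)) ℝ)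
    (hA : ∀ x : G n, Af L x
      = x ⟨0, h0⟩ • (Jm n).mulVec (L.mulVec (E n 1)) + x ⟨1, h1⟩ • L.mulVec (E n 1))
    (x y : G n) : Nij L x y = 0 := by
  rw [Nij_eq L h0 h1, hA x, hA y]
  simp only [Matrix.mulVec_add, Matrix.mulVec_smul, JJ]
  module

lemma A_decomp (h0 : 0 < 2*n) (h1 : 1 < 2*n) (L : Matrix (Fin (2*n)) (Fin (2*n)) ℝ)
    (hP : ∀ y : G n, inA y → Af L y = 0)
    (hL0 : L.mulVec (E n 0) = 0) (x : G n) :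
    Af L x = x ⟨0, h0⟩ • (Jm n).mulVec (L.mulVec (E n 1))
      + x ⟨1, h1⟩ • L.mulVec (E n 1) := by
  have hxa : inA (x - x ⟨0, h0⟩ • E n 0 - x ⟨1, h1⟩ • E n 1) := by
    intro i hi
    have hcase : (i:ℕ) = 0 ∨ (i:ℕ) = 1 := by omega
    rcases hcase with h | h
    · have hieq : i = ⟨0, h0⟩ := Fin.ext h
      rw [hieq]
      simp only [Pi.sub_apply, Pi.smul_apply, smul_eq_mul]
      rw [E_self 0 h0, E_ne 1 ⟨0, h0⟩ (by show (0:ℕ) ≠ 1; omega)]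
      ring
    · have hieq : i = ⟨1, h1⟩ := Fin.ext h
      rw [hieq]
      simp only [Pi.sub_apply, Pi.smul_apply, smul_eq_mul]
      rw [E_ne 0 ⟨1, h1⟩ (by show (1:ℕ) ≠ 0; omega), E_self 1 h1]
      ring
  have hx : x = x ⟨0, h0⟩ • E n 0 + x ⟨1, h1⟩ • E n 1
      + (x - x ⟨0, h0⟩ • E n 0 - x ⟨1, h1⟩ • E n 1) := by
    funext i
    simp only [Pi.add_apply, Pi.sub_apply, Pi.smul_apply, smul_eq_mul]
    ring
  have hA0 : Af L (E n 0) = (Jm n).mulVec (L.mulVec (E n 1)) := by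
    unfold Af
    rw [hL0, Jm_E0 h0 h1]
    simp
  have hA1 : Af L (E n 1) = L.mulVec (E n 1) := by
    unfold Af
    rw [Jm_E1 h0 h1, Matrix.mulVec_neg, hL0]
    simp
  conv_lhs => rw [hx]
  rw [Af_add, Af_add, Af_smul, Af_smul, hP _ hxa, hA0, hA1, add_zero]

lemma stepIIIfwd (h0 : 0 < 2*n) (h1 : 1 < 2*n) (μ : ℝ) (v₀ w₀ : G n) (hw : inA w₀)
    (D : Matrix (Fin (2*n)) (Fin (2*n)) ℝ) (hD : DinA D)
    (hP : ∀ y : G n, inA y → Af (Lm μ v₀ w₀ D) y = 0) :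
    w₀ = 0 ∧ ∀ x : G n, inA x →
      D.mulVec ((Jm n).mulVec x) = (Jm n).mulVec (D.mulVec x) := by
  have hw0 : w₀ = 0 := by
    have h := hP w₀ hw
    rw [Af_on_a h0 h1 μ v₀ w₀ D hw] at h
    have h1' := congrFun h ⟨1, h1⟩
    simp only [Pi.add_apply, Pi.sub_apply, Pi.smul_apply, smul_eq_mul,
      Pi.zero_apply] at h1'
    rw [E_self 1 h1, E_ne 0 ⟨1, h1⟩ (by show (1:ℕ) ≠ 0; omega),
      inA_D D hD w₀ ⟨1, h1⟩ (by show (1:ℕ) < 2; norm_num),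
      inA_J h0 h1 (inA_D D hD ((Jm n).mulVec w₀)) ⟨1, h1⟩
        (by show (1:ℕ) < 2; norm_num)] at h1'
    have hww : inn w₀ w₀ = 0 := by linarith
    exact inn_self_eq_zero hww
  refine ⟨hw0, fun x hx => ?_⟩
  have h := hP ((Jm n).mulVec x) (inA_J h0 h1 hx)
  rw [Af_on_a h0 h1 μ v₀ w₀ D (inA_J h0 h1 hx), hw0, JJ] at h
  rw [Matrix.mulVec_neg, Matrix.mulVec_neg] at h
  simp only [inn_zero_left, zero_smul, zero_add, sub_zero] at h
  exact add_neg_eq_zero.mp h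

lemma stepIIIbwd (h0 : 0 < 2*n) (h1 : 1 < 2*n) (μ : ℝ) (v₀ : G n)
    (D : Matrix (Fin (2*n)) (Fin (2*n)) ℝ)
    (hcomm : ∀ x : G n, inA x →
      D.mulVec ((Jm n).mulVec x) = (Jm n).mulVec (D.mulVec x)) :
    ∀ y : G n, inA y → Af (Lm μ v₀ (0 : G n) D) y = 0 := by
  intro y hy
  rw [Af_on_a h0 h1 μ v₀ 0 D hy, hcomm y hy, JJ]
  simp only [inn_zero_left, zero_smul, zero_add, sub_zero]
  abel

end Statement15Aux

open Statement15Aux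


/-- `⟨N(x,y),x⟩ = 0` for all `x, y` (class `W₁⊕W₃⊕W₄ = G₁`) iff
`N = 0` (class `W₃⊕W₄`), which holds iff `w₀ = 0` and `D J' = J' D`. -/
theorem statement15 (n : ℕ) (hn : 2 ≤ n) (μ : ℝ) (v₀ w₀ : G n) (hv : inA v₀) (hw : inA w₀)
    (D : Matrix (Fin (2*n)) (Fin (2*n)) ℝ) (hD : DinA D) :
    ((∀ x y : G n, inn (Nij (Lm μ v₀ w₀ D) x y) x = 0)
        ↔ (∀ x y : G n, Nij (Lm μ v₀ w₀ D) x y = 0))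
      ∧ ((∀ x y : G n, Nij (Lm μ v₀ w₀ D) x y = 0)
        ↔ (w₀ = 0 ∧ (∀ x : G n, inA x → (D).mulVec ((Jm n).mulVec x) = (Jm n).mulVec ((D).mulVec x)))) := by
  have h0 : 0 < 2*n := by omega
  have h1 : 1 < 2*n := by omega
  have hL0 : (Lm μ v₀ w₀ D).mulVec (E n 0) = 0 := Lm_E0 h0 μ v₀ w₀ hw D hD
  have hN_of : (w₀ = 0 ∧ ∀ x : G n, inA x →
        D.mulVec ((Jm n).mulVec x) = (Jm n).mulVec (D.mulVec x)) →
      ∀ x y : G n, Nij (Lm μ v₀ w₀ D) x y = 0 := by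
    rintro ⟨hw0, hcomm⟩
    subst hw0
    exact stepII h0 h1 _
      (A_decomp h0 h1 _ (stepIIIbwd h0 h1 μ v₀ D hcomm) hL0)
  have hG_to : (∀ x y : G n, inn (Nij (Lm μ v₀ w₀ D) x y) x = 0) →
      (w₀ = 0 ∧ ∀ x : G n, inA x →
        D.mulVec ((Jm n).mulVec x) = (Jm n).mulVec (D.mulVec x)) := fun hG =>
    stepIIIfwd h0 h1 μ v₀ w₀ hw D hD (fun y hy => stepI h0 h1 _ hG hy)
  refine ⟨⟨fun hG => hN_of (hG_to hG), fun hN x y => ?_⟩,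
    ⟨fun hN => hG_to (fun x y => ?_), hN_of⟩⟩
  · rw [hN x y]
    exact inn_zero_left x
  · rw [hN x y]
    exact inn_zero_left x
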